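/- arXiv:math/9201202 — 3 statements merged into one kernel-verified Lean document; each statement's English description precedes it below -/
import Mathlib

section
/- Let T : Z → L_1(μ) be a bounded linear operator from a Banach space Z. Suppose z_1, …, z_m are in the closed unit ball of Z and F_1, …, F_m are mutually disjoint μ-measurable sets such that ‖1_{F_i}·Tz_i‖_{L_1(μ)} ≥ δ·‖T‖ > 0 for each i = 1, …, m. Then there exist a natural number k ≥ (1/8)·δ·m and bounded linear operators A : ℓ_1^k → Z and B : L_1(μ) → ℓ_1^k such that B∘T∘A = id_{ℓ_1^k} and ‖A‖·‖B‖·‖T‖ ≤ 2·δ^{−1}; in particular γ_T(ℓ_1^k) ≤ 2·δ^{−1}·‖T‖^{−1} for some k ≥ (1/8)·δ·m. -/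
open MeasureTheory ENNReal

noncomputable section

/-- `ℓ_1^k`: `ℝ^k` with the `ℓ_1` norm. -/
abbrev ellOne (k : ℕ) := PiLp 1 (fun _ : Fin k => ℝ)

/-- `ℓ_∞^k`: `ℝ^k` with the sup norm. -/
abbrev ellInf (k : ℕ) := PiLp ⊤ (fun _ : Fin k => ℝ)

/-- The factorization constant `γ_T(U)` of `U` through `T`, as a value in `ℝ≥0∞`
(`∞` if no bounded factorization `U = B ∘ T ∘ A` exists). -/
def gammaFac {Z W X Y : Type*} [NormedAddCommGroup Z] [NormedSpace ℝ Z]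
    [NormedAddCommGroup W] [NormedSpace ℝ W] [NormedAddCommGroup X] [NormedSpace ℝ X]
    [NormedAddCommGroup Y] [NormedSpace ℝ Y]
    (T : Z →L[ℝ] W) (U : X →L[ℝ] Y) : ℝ≥0∞ :=
  sInf {c : ℝ≥0∞ | ∃ (A : X →L[ℝ] Z) (B : W →L[ℝ] Y),
    B.comp (T.comp A) = U ∧ c = ENNReal.ofReal (‖A‖ * ‖B‖)}

/-- The conjugate exponent `t* = t/(t-1)`, with `∞* = 1`, as a real number. -/
def conjExp (t : ℝ≥0∞) : ℝ := if t = ∞ then 1 else t.toReal / (t.toReal - 1)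

/-- `C_{p,q}(u)`: the infimum over changes of density `h > 0`, `h ∈ L_s(μ)` (where
`1/q + 1/s = 1/p`) of `‖h‖_s ⬝ ‖h⁻¹ u : Z → L_q(μ)‖`, as a value in `ℝ≥0∞`. -/
def Cfac {Ω : Type*} [MeasurableSpace Ω] {μ : Measure Ω} {Z : Type*}
    [NormedAddCommGroup Z] [NormedSpace ℝ Z] (p q : ℝ≥0∞) [Fact (1 ≤ p)]
    (u : Z →L[ℝ] Lp ℝ p μ) : ℝ≥0∞ :=
  sInf {c : ℝ≥0∞ | ∃ (h : Ω → ℝ) (s : ℝ≥0∞) (M : ℝ),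
    1 / q + 1 / s = 1 / p ∧
    (∀ᵐ x ∂μ, 0 < h x) ∧ MemLp h s μ ∧ 0 ≤ M ∧
    (∀ z : Z, eLpNorm (fun x => (u z : Ω → ℝ) x / h x) q μ ≤ ENNReal.ofReal (M * ‖z‖)) ∧
    c = eLpNorm h s μ * ENNReal.ofReal M}

/-- The `t`-summing norm `π_t(U)` of an operator, as a value in `ℝ≥0∞`. -/
def piSum {X Y : Type*} [NormedAddCommGroup X] [NormedSpace ℝ X]
    [NormedAddCommGroup Y] [NormedSpace ℝ Y] (t : ℝ) (U : X →L[ℝ] Y) : ℝ≥0∞ :=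
  sInf {c : ℝ≥0∞ | ∃ C : ℝ, 0 ≤ C ∧ c = ENNReal.ofReal C ∧
    ∀ (m : ℕ) (x : Fin m → X),
      (∑ i, ‖U (x i)‖ ^ t) ^ (1 / t) ≤
        C * sSup {r : ℝ | ∃ f : X →L[ℝ] ℝ, ‖f‖ ≤ 1 ∧ r = (∑ i, |f (x i)| ^ t) ^ (1 / t)}}

/-- The Banach–Mazur distance between two normed spaces, as a value in `ℝ≥0∞`
(`∞` if they are not isomorphic). -/
def bmDist (X Y : Type*) [NormedAddCommGroup X] [NormedSpace ℝ X]
    [NormedAddCommGroup Y] [NormedSpace ℝ Y] : ℝ≥0∞ :=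
  sInf {c : ℝ≥0∞ | ∃ S : X ≃L[ℝ] Y,
    c = ENNReal.ofReal (‖(S : X →L[ℝ] Y)‖ * ‖(S.symm : Y →L[ℝ] X)‖)}

/-- `γ_1(S)`: the infimum of `‖A‖⬝‖B‖` over factorizations `S = B ∘ A` through a space
`L_1(ν)`, as a value in `ℝ≥0∞`. -/
def gammaLone {X Y : Type*} [NormedAddCommGroup X] [NormedSpace ℝ X]
    [NormedAddCommGroup Y] [NormedSpace ℝ Y] (S : X →L[ℝ] Y) : ℝ≥0∞ :=
  sInf {c : ℝ≥0∞ | ∃ (Ω : Type) (mΩ : MeasurableSpace Ω) (ν : @Measure Ω mΩ)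
    (A : X →L[ℝ] Lp ℝ 1 ν) (B : Lp ℝ 1 ν →L[ℝ] Y),
    B.comp A = S ∧ c = ENNReal.ofReal (‖A‖ * ‖B‖)}

/-- The Gordon–Lewis norm `gl(T)`, as a value in `ℝ≥0∞`. -/
def glNorm {X Y : Type*} [NormedAddCommGroup X] [NormedSpace ℝ X]
    [NormedAddCommGroup Y] [NormedSpace ℝ Y] (T : X →L[ℝ] Y) : ℝ≥0∞ :=
  sSup {c : ℝ≥0∞ | ∃ U : Y →L[ℝ] lp (fun _ : ℕ => ℝ) 2,
    piSum 1 U ≤ 1 ∧ c = gammaLone (U.comp T)}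

/-- The cotype-`q` constant of a normed space, as a value in `ℝ≥0∞`. -/
def cotypeConst (q : ℝ) (W : Type*) [NormedAddCommGroup W] [NormedSpace ℝ W] : ℝ≥0∞ :=
  sInf {c : ℝ≥0∞ | ∃ C : ℝ, 0 ≤ C ∧ c = ENNReal.ofReal C ∧
    ∀ (m : ℕ) (w : Fin m → W),
      (∑ i, ‖w i‖ ^ q) ^ (1 / q) ≤
        C * (((∑ ε : Fin m → Bool, ‖∑ i, (if ε i then (1 : ℝ) else -1) • w i‖ ^ 2) / 2 ^ m)
          ^ ((1 : ℝ) / 2))}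

/-- `q_W(n, β)`: the least `k` such that every operator `v` from `W` of rank `≤ n` admits a
finite rank operator `P : W → W` with `v ∘ P = v`, `‖P‖ ≤ β` and `rank P ≤ k`. -/
def qW (W : Type*) [NormedAddCommGroup W] [NormedSpace ℝ W] (n : ℕ) (β : ℝ) : ℕ∞ :=
  sInf {k : ℕ∞ | ∃ k' : ℕ, k = (k' : ℕ∞) ∧
    ∀ (E : Type) [NormedAddCommGroup E] [NormedSpace ℝ E] (v : W →L[ℝ] E),
      Module.rank ℝ (LinearMap.range v.toLinearMap) ≤ (n : Cardinal) →
      ∃ P : W →L[ℝ] W, v.comp P = v ∧ ‖P‖ ≤ β ∧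
        Module.rank ℝ (LinearMap.range P.toLinearMap) ≤ (k' : Cardinal)}

/-- The adjoint (dual) operator `v* : Y* → X*` of `v : X → Y`. -/
def opDual {X Y : Type*} [NormedAddCommGroup X] [NormedSpace ℝ X]
    [NormedAddCommGroup Y] [NormedSpace ℝ Y] (v : X →L[ℝ] Y) :
    (Y →L[ℝ] ℝ) →L[ℝ] (X →L[ℝ] ℝ) :=
  (ContinuousLinearMap.compL ℝ X Y ℝ).flip v

end

/-!
Put `a i j = ‖1_{F i} · T (z j)‖₁`. Since the `F i` are disjoint, each column sum of `a` is at most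
`‖T (z j)‖ ≤ ‖T‖`, while each diagonal entry is at least `δ‖T‖`. Keep each index independently with
probability `δ/4`, then discard the indices whose off-diagonal column sum within the kept set
exceeds `δ‖T‖/2`: on average at least `δm/8` indices survive, so for some outcome a set `I` of
that size survives, and `a` restricted to `I` is diagonally dominant in the `ℓ₁` sense.

For `j ∈ I` let `φ j` be a norming functional of `1_{F j} · T (z j)` composed with restriction
to `F j`. With `A₀ e_j = z j` and `B f = (φ j f / a j j)_j`, the operator `B T A₀` is within `1/2`
of the identity of `ℓ₁^I`, so `A = A₀ (B T A₀)⁻¹` has norm at most `2`.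
-/

open Finset

section RandomSubset

variable {ι : Type*} [Fintype ι] [DecidableEq ι]

/-- The probability that a random subset of `ι`, containing each element independently with
probability `p`, equals `I`. -/
def bernoulliWeight (p : ℝ) (I : Finset ι) : ℝ := p ^ #I * (1 - p) ^ (Fintype.card ι - #I)

omit [DecidableEq ι] in
theorem bernoulliWeight_pos {p : ℝ} (hp0 : 0 < p) (hp1 : p < 1) (I : Finset ι) :
    0 < bernoulliWeight p I :=
  mul_pos (pow_pos hp0 _) (pow_pos (sub_pos.mpr hp1) _)

theorem sum_bernoulliWeight_of_subset (p : ℝ) (S : Finset ι) :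
    ∑ I, (if S ⊆ I then bernoulliWeight p I else 0) = p ^ #S := by
  have h := Fintype.prod_add (fun _ => p) (fun a => if a ∈ S then 0 else 1 - p)
  have hfactor : ∀ a, (p + if a ∈ S then 0 else 1 - p) = if a ∈ S then p else 1 := fun a => by
    split_ifs <;> ring
  simp only [hfactor, prod_ite_mem, univ_inter, prod_const] at h
  rw [h]
  refine sum_congr rfl fun I _ => ?_
  have hzero : ∀ a, (if a ∈ S then (0 : ℝ) else 1 - p) = if a ∉ S then 1 - p else 0 :=
    fun a => by split_ifs <;> rfl
  have hsub : (∀ a ∈ Iᶜ, a ∉ S) ↔ S ⊆ I := by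
    simp only [mem_compl, not_imp_not, subset_iff]
  simp only [hzero, prod_ite_zero, prod_const, card_compl, hsub, mul_ite, mul_zero,
    bernoulliWeight]

theorem sum_bernoulliWeight (p : ℝ) : ∑ I : Finset ι, bernoulliWeight p I = 1 := by
  simpa using sum_bernoulliWeight_of_subset (ι := ι) p ∅

theorem sum_bernoulliWeight_mul_card (p : ℝ) :
    ∑ I : Finset ι, bernoulliWeight p I * #I = p * Fintype.card ι := by
  have hcard : ∀ I : Finset ι, bernoulliWeight p I * #I
      = ∑ j, if {j} ⊆ I then bernoulliWeight p I else 0 := fun I => by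
    simp [sum_ite_mem, mul_comm]
  rw [sum_congr rfl fun I _ => hcard I, sum_comm]
  calc ∑ j : ι, ∑ I : Finset ι, (if {j} ⊆ I then bernoulliWeight p I else 0) = ∑ _j : ι, p :=
        sum_congr rfl fun j _ => by rw [sum_bernoulliWeight_of_subset, card_singleton, pow_one]
    _ = p * Fintype.card ι := by simp [mul_comm]

theorem sum_sum_erase_eq_sum_ite_subset (I : Finset ι) (g : ι → ι → ℝ) :
    ∑ j ∈ I, ∑ i ∈ I.erase j, g i j
      = ∑ j, ∑ i ∈ univ.erase j, if {i, j} ⊆ I then g i j else 0 := by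
  rw [← sum_subset (subset_univ I) fun j _ hj =>
    sum_eq_zero fun i _ => if_neg fun h => hj (h (by simp))]
  refine sum_congr rfl fun j hj => ?_
  rw [← sum_filter]
  congr 1
  ext i
  simp [insert_subset_iff, hj]

theorem sum_bernoulliWeight_mul_sum_sum_erase (p : ℝ) (g : ι → ι → ℝ) :
    ∑ I : Finset ι, bernoulliWeight p I * ∑ j ∈ I, ∑ i ∈ I.erase j, g i j
      = p ^ 2 * ∑ j, ∑ i ∈ univ.erase j, g i j := by
  have hexpand : ∀ I : Finset ι, bernoulliWeight p I * ∑ j ∈ I, ∑ i ∈ I.erase j, g i j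
      = ∑ j, ∑ i ∈ univ.erase j, (if {i, j} ⊆ I then bernoulliWeight p I else 0) * g i j :=
    fun I => by
      rw [sum_sum_erase_eq_sum_ite_subset, mul_sum]
      refine sum_congr rfl fun j _ => ?_
      rw [mul_sum]
      exact sum_congr rfl fun i _ => by split_ifs <;> ring
  rw [sum_congr rfl fun I _ => hexpand I, sum_comm, mul_sum]
  refine sum_congr rfl fun j _ => ?_
  rw [sum_comm, mul_sum]
  refine sum_congr rfl fun i hi => ?_
  have hpair : #({i, j} : Finset ι) = 2 := card_pair (ne_of_mem_erase hi)
  rw [← hpair, ← sum_bernoulliWeight_of_subset, sum_mul]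

theorem exists_le_of_le_sum_bernoulliWeight_mul {p : ℝ} (hp0 : 0 < p) (hp1 : p < 1)
    (f : Finset ι → ℝ) {c : ℝ} (h : c ≤ ∑ I : Finset ι, bernoulliWeight p I * f I) :
    ∃ I, c ≤ f I := by
  have hc : ∑ I : Finset ι, bernoulliWeight p I * c ≤ ∑ I, bernoulliWeight p I * f I := by
    rwa [← sum_mul, sum_bernoulliWeight, one_mul]
  obtain ⟨I, -, hI⟩ := exists_le_of_sum_le univ_nonempty hc
  exact ⟨I, le_of_mul_le_mul_left hI (bernoulliWeight_pos hp0 hp1 I)⟩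

omit [Fintype ι] in
theorem exists_subset_sum_erase_le (a : ι → ι → ℝ) (ha : ∀ i j, 0 ≤ a i j) {t : ℝ}
    (ht : 0 < t) (I : Finset ι) :
    ∃ J ⊆ I, #I - (∑ j ∈ I, ∑ i ∈ I.erase j, a i j) / t ≤ #J ∧
      ∀ j ∈ J, ∑ i ∈ J.erase j, a i j ≤ t := by
  set J := I.filter fun j => ∑ i ∈ I.erase j, a i j ≤ t
  refine ⟨J, filter_subset _ _, ?_, fun j hj => ?_⟩
  · have hbad : #(I.filter fun j => ¬ ∑ i ∈ I.erase j, a i j ≤ t) * t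
        ≤ ∑ j ∈ I, ∑ i ∈ I.erase j, a i j := by
      rw [← nsmul_eq_mul]
      refine (card_nsmul_le_sum _ _ _ fun j hj => (not_le.mp (mem_filter.mp hj).2).le).trans ?_
      exact sum_le_sum_of_subset_of_nonneg (filter_subset _ _)
        fun j _ _ => sum_nonneg fun i _ => ha i j
    have hcard : (#I : ℝ) = #J + #(I.filter fun j => ¬ ∑ i ∈ I.erase j, a i j ≤ t) := by
      exact_mod_cast (card_filter_add_card_filter_not (s := I) _).symm
    linarith [(le_div_iff₀ ht).mpr hbad]
  · refine le_trans ?_ (mem_filter.mp hj).2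
    exact sum_le_sum_of_subset_of_nonneg (erase_subset_erase _ (filter_subset _ _))
      fun i _ _ => ha i j

theorem exists_large_subset_sum_erase_le (a : ι → ι → ℝ) (ha : ∀ i j, 0 ≤ a i j) {p R : ℝ}
    (hp0 : 0 < p) (hp1 : p < 1) (hR : 0 < R) (hcol : ∀ j, ∑ i ∈ univ.erase j, a i j ≤ R) :
    ∃ I : Finset ι, p * Fintype.card ι / 2 ≤ #I ∧
      ∀ j ∈ I, ∑ i ∈ I.erase j, a i j ≤ 2 * p * R := by
  have ht : 0 < 2 * p * R := by positivity
  have hmass : ∑ j, ∑ i ∈ univ.erase j, a i j ≤ Fintype.card ι * R := by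
    simpa using sum_le_sum fun j (_ : j ∈ univ) => hcol j
  have hexp : ∑ I : Finset ι, bernoulliWeight p I *
        (#I - (∑ j ∈ I, ∑ i ∈ I.erase j, a i j) / (2 * p * R))
      = p * Fintype.card ι - p ^ 2 * (∑ j, ∑ i ∈ univ.erase j, a i j) / (2 * p * R) := by
    simp only [mul_sub, sum_sub_distrib, sum_bernoulliWeight_mul_card, mul_div_assoc', ← sum_div,
      sum_bernoulliWeight_mul_sum_sum_erase]
  have hbound : p ^ 2 * (∑ j, ∑ i ∈ univ.erase j, a i j) / (2 * p * R)
      ≤ p * Fintype.card ι / 2 :=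
    calc p ^ 2 * (∑ j, ∑ i ∈ univ.erase j, a i j) / (2 * p * R)
        ≤ p ^ 2 * (Fintype.card ι * R) / (2 * p * R) := by gcongr
      _ = p * Fintype.card ι / 2 := by field_simp
  obtain ⟨I, hI⟩ := exists_le_of_le_sum_bernoulliWeight_mul hp0 hp1
    (fun I => #I - (∑ j ∈ I, ∑ i ∈ I.erase j, a i j) / (2 * p * R))
    (by linarith : p * Fintype.card ι / 2 ≤ _)
  obtain ⟨J, -, hJ, hJcol⟩ := exists_subset_sum_erase_le a ha ht I
  exact ⟨J, hI.trans hJ, hJcol⟩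

end RandomSubset

theorem PiLp.opNorm_le_of_norm_single_le {𝕜 J E : Type*} [NontriviallyNormedField 𝕜]
    [Fintype J] [DecidableEq J] [NormedAddCommGroup E] [NormedSpace 𝕜 E]
    (U : PiLp 1 (fun _ : J => 𝕜) →L[𝕜] E) {c : ℝ} (hc : 0 ≤ c)
    (hU : ∀ j, ‖U (PiLp.single 1 j 1)‖ ≤ c) : ‖U‖ ≤ c := by
  refine U.opNorm_le_bound hc fun x => ?_
  have hx : x = ∑ j, x j • PiLp.single 1 j (1 : 𝕜) := by
    ext i
    simp [Pi.single_apply]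
  calc ‖U x‖ = ‖∑ j, x j • U (PiLp.single 1 j 1)‖ := by
        conv_lhs => rw [hx]
        simp [map_sum, map_smul]
    _ ≤ ∑ j, ‖x j‖ * c := by
        refine (norm_sum_le _ _).trans (sum_le_sum fun j _ => ?_)
        rw [norm_smul]
        exact mul_le_mul_of_nonneg_left (hU j) (norm_nonneg _)
    _ = c * ‖x‖ := by rw [PiLp.norm_eq_of_L1, ← sum_mul, mul_comm]

theorem ContinuousLinearMap.exists_mul_eq_one_of_norm_one_sub_lt_one {𝕜 E : Type*}
    [NontriviallyNormedField 𝕜] [NormedAddCommGroup E] [NormedSpace 𝕜 E] [CompleteSpace E]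
    (S : E →L[𝕜] E) (h : ‖1 - S‖ < 1) :
    ∃ V : E →L[𝕜] E, S * V = 1 ∧ ‖V‖ ≤ (1 - ‖1 - S‖)⁻¹ := by
  let u := Units.oneSub (1 - S) h
  have hu : (u : E →L[𝕜] E) = S := sub_sub_cancel 1 S
  refine ⟨↑u⁻¹, hu ▸ u.mul_inv, ?_⟩
  have hgeom := tsum_geometric_le_of_norm_lt_one (1 - S) h
  have hone : ‖(1 : E →L[𝕜] E)‖ ≤ 1 := norm_id_le
  change ‖∑' n : ℕ, (1 - S) ^ n‖ ≤ _
  linarith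

section Factorization

variable {X Z : Type*} [NormedAddCommGroup X] [NormedSpace ℝ X]
  [NormedAddCommGroup Z] [NormedSpace ℝ Z]

theorem PiLp.exists_clm_single_eq {J : Type*} [Fintype J] [DecidableEq J] (z : J → Z) {c : ℝ}
    (hc : 0 ≤ c) (hz : ∀ j, ‖z j‖ ≤ c) :
    ∃ A : PiLp 1 (fun _ : J => ℝ) →L[ℝ] Z, (∀ j, A (PiLp.single 1 j 1) = z j) ∧ ‖A‖ ≤ c := by
  set A : PiLp 1 (fun _ : J => ℝ) →L[ℝ] Z :=
    ∑ j, (PiLp.proj 1 (fun _ : J => ℝ) j).smulRight (z j)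
  have hA : ∀ j, A (PiLp.single 1 j 1) = z j := fun j => by
    simp [A, PiLp.single_apply]
  exact ⟨A, hA, PiLp.opNorm_le_of_norm_single_le A hc fun j => (hA j).symm ▸ hz j⟩

theorem exists_clm_piLp_one_apply_self_eq_one {J : Type*} [Fintype J] {Y : J → Type*}
    [∀ j, NormedAddCommGroup (Y j)] [∀ j, NormedSpace ℝ (Y j)]
    (P : ∀ j, X →L[ℝ] Y j) (hP : ∀ x, ∑ j, ‖P j x‖ ≤ ‖x‖) (x : J → X) {d : ℝ} (hd : 0 < d)
    (hdiag : ∀ j, d ≤ ‖P j (x j)‖) :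
    ∃ B : X →L[ℝ] PiLp 1 (fun _ : J => ℝ),
      ‖B‖ ≤ d⁻¹ ∧ (∀ j, B (x j) j = 1) ∧ ∀ y j, |B y j| ≤ d⁻¹ * ‖P j y‖ := by
  choose ψ hψ1 hψ using fun j => exists_dual_vector'' ℝ (P j (x j))
  have hc : ∀ j, 0 < ‖P j (x j)‖ := fun j => hd.trans_le (hdiag j)
  set B : X →L[ℝ] PiLp 1 (fun _ : J => ℝ) :=
    (PiLp.continuousLinearEquiv 1 ℝ (fun _ : J => ℝ)).symm.toContinuousLinearMap.comp
      (ContinuousLinearMap.pi fun j => ‖P j (x j)‖⁻¹ • (ψ j).comp (P j))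
  have hB : ∀ y j, B y j = ‖P j (x j)‖⁻¹ * ψ j (P j y) := fun y j => rfl
  have hBcoord : ∀ y j, |B y j| ≤ d⁻¹ * ‖P j y‖ := fun y j => by
    rw [hB, abs_mul, abs_inv, abs_of_pos (hc j)]
    exact mul_le_mul (inv_anti₀ hd (hdiag j))
      (by simpa using (ψ j).le_of_opNorm_le (hψ1 j) (P j y)) (abs_nonneg _) (by positivity)
  refine ⟨B, B.opNorm_le_bound (by positivity) fun y => ?_,
    fun j => by rw [hB, hψ]; exact inv_mul_cancel₀ (hc j).ne', hBcoord⟩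
  rw [PiLp.norm_eq_of_L1]
  calc ∑ j, ‖B y j‖ ≤ ∑ j, d⁻¹ * ‖P j y‖ := sum_le_sum fun j _ => hBcoord y j
    _ ≤ d⁻¹ * ‖y‖ := by
        rw [← mul_sum]
        exact mul_le_mul_of_nonneg_left (hP y) (by positivity)

theorem exists_factorization_piLp_one_of_sum_erase_le {J : Type*} [Fintype J] [DecidableEq J]
    {Y : J → Type*} [∀ j, NormedAddCommGroup (Y j)] [∀ j, NormedSpace ℝ (Y j)]
    (T : Z →L[ℝ] X) (P : ∀ j, X →L[ℝ] Y j) (hP : ∀ x, ∑ j, ‖P j x‖ ≤ ‖x‖)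
    (z : J → Z) (hz : ∀ j, ‖z j‖ ≤ 1) {d : ℝ} (hd : 0 < d)
    (hdiag : ∀ j, d ≤ ‖P j (T (z j))‖)
    (hoff : ∀ j, ∑ i ∈ univ.erase j, ‖P i (T (z j))‖ ≤ d / 2) :
    ∃ (A : PiLp 1 (fun _ : J => ℝ) →L[ℝ] Z) (B : X →L[ℝ] PiLp 1 (fun _ : J => ℝ)),
      B.comp (T.comp A) = ContinuousLinearMap.id ℝ _ ∧ ‖A‖ ≤ 2 ∧ ‖B‖ ≤ d⁻¹ := by
  obtain ⟨B, hBnorm, hBdiag, hBcoord⟩ :=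
    exists_clm_piLp_one_apply_self_eq_one P hP (fun j => T (z j)) hd hdiag
  obtain ⟨A₀, hA₀, hA₀norm⟩ := PiLp.exists_clm_single_eq z zero_le_one hz
  have hS : ‖1 - B.comp (T.comp A₀)‖ ≤ 1 / 2 :=
    PiLp.opNorm_le_of_norm_single_le _ (by norm_num) fun j => by
      have hcoord : ∀ i, ((1 - B.comp (T.comp A₀)) (PiLp.single 1 j 1)) i
          = (if i = j then 1 else 0) - B (T (z j)) i := fun i => by
        simp [hA₀, PiLp.single_apply]
      rw [PiLp.norm_eq_of_L1, ← add_sum_erase _ _ (mem_univ j), hcoord, if_pos rfl, hBdiag,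
        sub_self, norm_zero, zero_add]
      calc ∑ i ∈ univ.erase j, ‖((1 - B.comp (T.comp A₀)) (PiLp.single 1 j 1)) i‖
          = ∑ i ∈ univ.erase j, |B (T (z j)) i| := sum_congr rfl fun i hi => by
            rw [hcoord, if_neg (ne_of_mem_erase hi), zero_sub, Real.norm_eq_abs, abs_neg]
        _ ≤ ∑ i ∈ univ.erase j, d⁻¹ * ‖P i (T (z j))‖ := sum_le_sum fun i _ => hBcoord _ i
        _ ≤ d⁻¹ * (d / 2) := by
            rw [← mul_sum]
            exact mul_le_mul_of_nonneg_left (hoff j) (by positivity)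
        _ = 1 / 2 := by field_simp
  obtain ⟨V, hSV, hV⟩ :=
    (B.comp (T.comp A₀)).exists_mul_eq_one_of_norm_one_sub_lt_one (hS.trans_lt (by norm_num))
  refine ⟨A₀.comp V, B, ?_, ?_, hBnorm⟩
  · simpa [ContinuousLinearMap.mul_def, ContinuousLinearMap.comp_assoc,
      ← ContinuousLinearMap.one_def] using hSV
  · have hV2 : (1 - ‖1 - B.comp (T.comp A₀)‖)⁻¹ ≤ 2 := by
      rw [inv_le_comm₀ (by linarith) two_pos]
      linarith
    calc ‖A₀.comp V‖ ≤ ‖A₀‖ * ‖V‖ := A₀.opNorm_comp_le V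
      _ ≤ 1 * 2 := mul_le_mul hA₀norm (hV.trans hV2) (norm_nonneg _) zero_le_one
      _ = 2 := one_mul 2

theorem exists_ellOne_factorization_of_sum_norm_le {ι : Type*} [Fintype ι] [DecidableEq ι]
    {Y : ι → Type*} [∀ i, NormedAddCommGroup (Y i)] [∀ i, NormedSpace ℝ (Y i)]
    (T : Z →L[ℝ] X) (P : ∀ i, X →L[ℝ] Y i) (hP : ∀ x, ∑ i, ‖P i x‖ ≤ ‖x‖)
    (z : ι → Z) (hz : ∀ i, ‖z i‖ ≤ 1) {δ : ℝ} (hpos : 0 < δ * ‖T‖)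
    (hlow : ∀ i, δ * ‖T‖ ≤ ‖P i (T (z i))‖) :
    ∃ k : ℕ, δ * Fintype.card ι / 8 ≤ k ∧ ∃ (A : ellOne k →L[ℝ] Z) (B : X →L[ℝ] ellOne k),
      B.comp (T.comp A) = ContinuousLinearMap.id ℝ (ellOne k) ∧ ‖A‖ ≤ 2 ∧
        ‖B‖ ≤ (δ * ‖T‖)⁻¹ := by
  have hδ : 0 < δ := pos_of_mul_pos_left hpos (norm_nonneg T)
  have hT : 0 < ‖T‖ := pos_of_mul_pos_right hpos hδ.le
  have hcolumn : ∀ j, ∑ i, ‖P i (T (z j))‖ ≤ ‖T‖ := fun j =>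
    (hP _).trans ((T.le_opNorm_of_le (hz j)).trans_eq (mul_one _))
  obtain ⟨I, hIcard, hIcol⟩ : ∃ I : Finset ι, δ * Fintype.card ι / 8 ≤ #I ∧
      ∀ j ∈ I, ∑ i ∈ I.erase j, ‖P i (T (z j))‖ ≤ δ * ‖T‖ / 2 := by
    rcases isEmpty_or_nonempty ι with hι | ⟨⟨i₀⟩⟩
    · exact ⟨∅, by simp, by simp⟩
    have hδ1 : δ ≤ 1 := by
      have := (hlow i₀).trans ((single_le_sum (f := fun i => ‖P i (T (z i₀))‖)
        (fun i _ => norm_nonneg _) (mem_univ i₀)).trans (hcolumn i₀))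
      exact (mul_le_iff_le_one_left hT).mp this
    obtain ⟨I, hI, hIcol⟩ := exists_large_subset_sum_erase_le (fun i j => ‖P i (T (z j))‖)
      (fun _ _ => norm_nonneg _) (p := δ / 4) (by positivity) (by linarith) hT
      fun j => (sum_le_sum_of_subset_of_nonneg (subset_univ _) fun _ _ _ => norm_nonneg _).trans
        (hcolumn j)
    exact ⟨I, by linarith, fun j hj => (hIcol j hj).trans_eq (by ring)⟩
  set s : Fin #I ↪ ι := I.equivFin.symm.toEmbedding.trans (Function.Embedding.subtype _)
  have hs : ∀ i, s i ∈ I := fun i => (I.equivFin.symm i).2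
  have hPs : ∀ x, ∑ i, ‖P (s i) x‖ ≤ ‖x‖ := fun x => by
    rw [← sum_map univ s fun i => ‖P i x‖]
    exact (sum_le_sum_of_subset_of_nonneg (subset_univ _) fun _ _ _ => norm_nonneg _).trans (hP x)
  have hoffs : ∀ j, ∑ i ∈ univ.erase j, ‖P (s i) (T (z (s j)))‖ ≤ δ * ‖T‖ / 2 := fun j => by
    rw [← sum_map _ s fun i => ‖P i (T (z (s j)))‖]
    refine (sum_le_sum_of_subset_of_nonneg ?_ fun _ _ _ => norm_nonneg _).trans
      (hIcol _ (hs j))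
    intro x hx
    obtain ⟨i, hi, rfl⟩ := mem_map.mp hx
    exact mem_erase.mpr ⟨fun h => ne_of_mem_erase hi (s.injective h), hs i⟩
  obtain ⟨A, B, hBTA, hA, hB⟩ := exists_factorization_piLp_one_of_sum_erase_le T
    (fun i => P (s i)) hPs (fun i => z (s i)) (fun i => hz (s i)) hpos (fun i => hlow (s i)) hoffs
  exact ⟨#I, hIcard, A, B, hBTA, hA, hB⟩

end Factorization

theorem sum_norm_LpToLpRestrictCLM_le {Ω E ι : Type*} [MeasurableSpace Ω] {μ : Measure Ω}
    [NormedAddCommGroup E] [NormedSpace ℝ E] [Fintype ι] {s : ι → Set Ω}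
    (hs : ∀ i, MeasurableSet (s i)) (hdisj : Pairwise (Function.onFun Disjoint s))
    (f : Lp E 1 μ) :
    ∑ i, ‖LpToLpRestrictCLM Ω E ℝ μ 1 (s i) f‖ ≤ ‖f‖ := by
  have hrestrict : ∀ i, ‖LpToLpRestrictCLM Ω E ℝ μ 1 (s i) f‖
      = (eLpNorm f 1 (μ.restrict (s i))).toReal := fun i => by
    rw [Lp.norm_def, eLpNorm_congr_ae (LpToLpRestrictCLM_coeFn ℝ (s i) f)]
  have hsum : ∑ i, eLpNorm f 1 (μ.restrict (s i)) = eLpNorm f 1 (μ.restrict (⋃ i, s i)) := by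
    simp only [eLpNorm_one_eq_lintegral_enorm]
    rw [lintegral_iUnion hs hdisj, tsum_fintype]
  simp_rw [hrestrict, Lp.norm_def]
  rw [← ENNReal.toReal_sum fun i _ => ?_, hsum]
  · exact ENNReal.toReal_mono (Lp.eLpNorm_ne_top f)
      (eLpNorm_mono_measure _ Measure.restrict_le_self)
  · exact ((eLpNorm_mono_measure _ Measure.restrict_le_self).trans_lt (Lp.eLpNorm_lt_top f)).ne

theorem norm_LpToLpRestrictCLM_eq {Ω E : Type*} [MeasurableSpace Ω] {μ : Measure Ω}
    [NormedAddCommGroup E] [NormedSpace ℝ E] {s : Set Ω} (hs : MeasurableSet s)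
    (f : Lp E 1 μ) :
    ‖LpToLpRestrictCLM Ω E ℝ μ 1 s f‖ = (eLpNorm (s.indicator f) 1 μ).toReal := by
  rw [Lp.norm_def, eLpNorm_congr_ae (LpToLpRestrictCLM_coeFn ℝ s f),
    eLpNorm_indicator_eq_eLpNorm_restrict hs]

theorem gammaFac_le_of_comp_eq {Z W X Y : Type*} [NormedAddCommGroup Z] [NormedSpace ℝ Z]
    [NormedAddCommGroup W] [NormedSpace ℝ W] [NormedAddCommGroup X] [NormedSpace ℝ X]
    [NormedAddCommGroup Y] [NormedSpace ℝ Y] {T : Z →L[ℝ] W} {U : X →L[ℝ] Y}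
    {A : X →L[ℝ] Z} {B : W →L[ℝ] Y} (h : B.comp (T.comp A) = U) :
    gammaFac T U ≤ ENNReal.ofReal (‖A‖ * ‖B‖) :=
  sInf_le ⟨A, B, h, rfl⟩

theorem statement1_general
    {Ω : Type*} [MeasurableSpace Ω] {μ : MeasureTheory.Measure Ω}
    {Z : Type*} [NormedAddCommGroup Z] [NormedSpace ℝ Z]
    (T : Z →L[ℝ] Lp ℝ 1 μ) (m : ℕ) (δ : ℝ)
    (z : Fin m → Z) (F : Fin m → Set Ω)
    (hz : ∀ i, ‖z i‖ ≤ 1) (hF : ∀ i, MeasurableSet (F i))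
    (hdisj : Pairwise (Function.onFun Disjoint F))
    (hpos : 0 < δ * ‖T‖)
    (hlow : ∀ i, (eLpNorm ((F i).indicator (T (z i) : Ω → ℝ)) 1 μ).toReal ≥ δ * ‖T‖) :
    ∃ k : ℕ, (k : ℝ) ≥ (1 / 8) * δ * m ∧
      ∃ (A : ellOne k →L[ℝ] Z) (B : Lp ℝ 1 μ →L[ℝ] ellOne k),
        B.comp (T.comp A) = ContinuousLinearMap.id ℝ (ellOne k) ∧
        ‖A‖ * ‖B‖ * ‖T‖ ≤ 2 * δ⁻¹ ∧
        gammaFac T (ContinuousLinearMap.id ℝ (ellOne k)) ≤ ENNReal.ofReal (2 * δ⁻¹ * ‖T‖⁻¹) := by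
  obtain ⟨k, hk, A, B, hBTA, hA, hB⟩ := exists_ellOne_factorization_of_sum_norm_le T
    (fun i => LpToLpRestrictCLM Ω ℝ ℝ μ 1 (F i)) (sum_norm_LpToLpRestrictCLM_le hF hdisj)
    z hz hpos fun i => by rw [norm_LpToLpRestrictCLM_eq (hF i)]; exact hlow i
  have hT : ‖T‖ ≠ 0 := fun h => by simp [h] at hpos
  have hAB : ‖A‖ * ‖B‖ ≤ 2 * δ⁻¹ * ‖T‖⁻¹ := by
    calc ‖A‖ * ‖B‖ ≤ 2 * (δ * ‖T‖)⁻¹ := mul_le_mul hA hB (norm_nonneg _) zero_le_two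
      _ = 2 * δ⁻¹ * ‖T‖⁻¹ := by rw [mul_inv, mul_assoc]
  rw [Fintype.card_fin] at hk
  refine ⟨k, by linarith, A, B, hBTA, ?_,
    (gammaFac_le_of_comp_eq hBTA).trans (ENNReal.ofReal_le_ofReal hAB)⟩
  calc ‖A‖ * ‖B‖ * ‖T‖ ≤ 2 * δ⁻¹ * ‖T‖⁻¹ * ‖T‖ := mul_le_mul_of_nonneg_right hAB (norm_nonneg T)
    _ = 2 * δ⁻¹ := by field_simp

theorem statement1
    {Ω : Type*} [MeasurableSpace Ω] {μ : MeasureTheory.Measure Ω}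
    {Z : Type*} [NormedAddCommGroup Z] [NormedSpace ℝ Z] [CompleteSpace Z]
    (T : Z →L[ℝ] Lp ℝ 1 μ) (m : ℕ) (δ : ℝ)
    (z : Fin m → Z) (F : Fin m → Set Ω)
    (hz : ∀ i, ‖z i‖ ≤ 1) (hF : ∀ i, MeasurableSet (F i))
    (hdisj : Pairwise (Function.onFun Disjoint F))
    (hpos : 0 < δ * ‖T‖)
    (hlow : ∀ i, (eLpNorm ((F i).indicator (T (z i) : Ω → ℝ)) 1 μ).toReal ≥ δ * ‖T‖) :
    ∃ k : ℕ, (k : ℝ) ≥ (1 / 8) * δ * m ∧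
      ∃ (A : ellOne k →L[ℝ] Z) (B : Lp ℝ 1 μ →L[ℝ] ellOne k),
        B.comp (T.comp A) = ContinuousLinearMap.id ℝ (ellOne k) ∧
        ‖A‖ * ‖B‖ * ‖T‖ ≤ 2 * δ⁻¹ ∧
        gammaFac T (ContinuousLinearMap.id ℝ (ellOne k)) ≤ ENNReal.ofReal (2 * δ⁻¹ * ‖T‖⁻¹) :=
  statement1_general T m δ z F hz hF hdisj hpos hlow
end

section
/- Let V : ℓ_∞^m → X be a bounded linear operator of norm 1 into a Banach space X such that ‖V e_i‖ ≥ δ > 0 for each coordinate unit vector e_i, i = 1, …, m. Then γ_V(ℓ_∞^k) ≤ 2·δ^{−1} for some natural number k ≥ (1/8)·δ·m. -/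
open MeasureTheory ENNReal

/-!
Pick norming functionals `f i` of the vectors `V eᵢ`. The matrix `a i j = f i (V eⱼ)` has
diagonal `≥ δ` and absolute row sums `≤ ‖V‖ = 1`. Keep each index independently with
probability `p = δ/4`: the expected size of the random set is `δm/4`, while the expected
off-diagonal mass inside it is at most `p²m`. Discarding, by Markov's inequality, the rows whose
off-diagonal mass exceeds `δ/2` leaves a set `σ` with `#σ ≥ δm/8` on which `a` is diagonally
dominant with margin `δ/2`. With `J : ℓ_∞^σ → ℓ_∞^m` the coordinate embedding and
`u = (f i)_{i ∈ σ} : X → ℓ_∞^σ`, the operator `u V J` is then bounded below by `δ/2`, hence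
invertible with inverse of norm `≤ 2/δ`, and `id = ((u V J)⁻¹ u) ∘ V ∘ J`.
-/

open Finset

lemma mul_norm_le_norm_mulVec_of_diag_dominant {ι : Type*} [Fintype ι] [DecidableEq ι]
    (a : Matrix ι ι ℝ) {c : ℝ} (h : ∀ i, c + ∑ j ∈ univ.erase i, |a i j| ≤ |a i i|)
    (y : ι → ℝ) : c * ‖y‖ ≤ ‖a.mulVec y‖ := by
  cases isEmpty_or_nonempty ι
  · simp [Subsingleton.elim y 0]
  obtain ⟨i, -, hi⟩ := exists_mem_eq_sup' univ_nonempty fun j => ‖y j‖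
  have hy : ‖y‖ = |y i| := by
    refine le_antisymm ?_ ((Real.norm_eq_abs _).symm.trans_le (norm_le_pi_norm y i))
    rw [← Real.norm_eq_abs, pi_norm_le_iff_of_nonneg (norm_nonneg _)]
    exact fun j => hi ▸ le_sup' (fun j => ‖y j‖) (mem_univ j)
  have hoff : |∑ j ∈ univ.erase i, a i j * y j| ≤ (∑ j ∈ univ.erase i, |a i j|) * |y i| := by
    rw [sum_mul]
    refine (abs_sum_le_sum_abs _ _).trans (sum_le_sum fun j _ => ?_)
    rw [abs_mul]
    exact mul_le_mul_of_nonneg_left (hy ▸ norm_le_pi_norm y j) (abs_nonneg _)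
  have hsplit : a.mulVec y i = a i i * y i + ∑ j ∈ univ.erase i, a i j * y j := by
    rw [Matrix.mulVec, dotProduct, ← add_sum_erase _ _ (mem_univ i)]
  calc c * ‖y‖ ≤ |a i i| * |y i| - (∑ j ∈ univ.erase i, |a i j|) * |y i| := by
        rw [hy]; nlinarith [h i, abs_nonneg (y i)]
    _ ≤ |a.mulVec y i| := by
        rw [hsplit, ← abs_mul]
        have := abs_sub_abs_le_abs_sub (a i i * y i) (-∑ j ∈ univ.erase i, a i j * y j)
        rw [abs_neg, sub_neg_eq_add] at this
        linarith
    _ ≤ ‖a.mulVec y‖ := norm_le_pi_norm (a.mulVec y) i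

lemma gammaFac_le_ofReal {Z W X Y : Type*} [NormedAddCommGroup Z] [NormedSpace ℝ Z]
    [NormedAddCommGroup W] [NormedSpace ℝ W] [NormedAddCommGroup X] [NormedSpace ℝ X]
    [NormedAddCommGroup Y] [NormedSpace ℝ Y] {T : Z →L[ℝ] W} {U : X →L[ℝ] Y}
    (A : X →L[ℝ] Z) (B : W →L[ℝ] Y) (h : B.comp (T.comp A) = U) :
    gammaFac T U ≤ ENNReal.ofReal (‖A‖ * ‖B‖) :=
  sInf_le ⟨A, B, h, rfl⟩

lemma gammaFac_id_le_of_le_norm {Z W Y : Type*} [NormedAddCommGroup Z] [NormedSpace ℝ Z]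
    [NormedAddCommGroup W] [NormedSpace ℝ W] [NormedAddCommGroup Y] [NormedSpace ℝ Y]
    [FiniteDimensional ℝ Y] (T : Z →L[ℝ] W) (A : Y →L[ℝ] Z) (u : W →L[ℝ] Y) {c : ℝ}
    (hc : 0 < c) (h : ∀ y, c * ‖y‖ ≤ ‖u (T (A y))‖) :
    gammaFac T (ContinuousLinearMap.id ℝ Y) ≤ ENNReal.ofReal (‖A‖ * ‖u‖ / c) := by
  set M : Y →L[ℝ] Y := u.comp (T.comp A)
  have hM : Function.Injective M := by
    refine (injective_iff_map_eq_zero M).2 fun y hy => norm_le_zero_iff.1 ?_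
    have := h y
    rw [show u (T (A y)) = 0 from hy, norm_zero] at this
    exact nonpos_of_mul_nonpos_right this hc
  set E := (LinearEquiv.ofInjectiveEndo (M : Y →ₗ[ℝ] Y) hM).toContinuousLinearEquiv
  have hEM : ∀ z, u (T (A (E.symm z))) = z := E.apply_symm_apply
  have hE : ‖(E.symm : Y →L[ℝ] Y)‖ ≤ c⁻¹ := by
    refine ContinuousLinearMap.opNorm_le_bound _ (inv_nonneg.2 hc.le) fun z => ?_
    rw [inv_mul_eq_div, le_div_iff₀' hc]
    have := h (E.symm z)
    rwa [hEM] at this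
  refine (gammaFac_le_ofReal A ((E.symm : Y →L[ℝ] Y).comp u) ?_).trans
    (ENNReal.ofReal_le_ofReal ?_)
  · ext1 y
    exact E.symm_apply_apply y
  · rw [mul_div_assoc]
    gcongr
    calc ‖(E.symm : Y →L[ℝ] Y).comp u‖ ≤ c⁻¹ * ‖u‖ :=
          (ContinuousLinearMap.opNorm_comp_le _ _).trans (by gcongr)
      _ = ‖u‖ / c := by ring

lemma exists_le_of_le_sum_mul {ι : Type*} {s : Finset ι} {w f : ι → ℝ}
    (hw₀ : ∀ i ∈ s, 0 ≤ w i) (hw₁ : ∑ i ∈ s, w i = 1) {c : ℝ}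
    (h : c ≤ ∑ i ∈ s, w i * f i) : ∃ i ∈ s, c ≤ f i := by
  have hs : s.Nonempty := nonempty_of_sum_ne_zero (hw₁ ▸ one_ne_zero)
  obtain ⟨i, hi, hmax⟩ := exists_mem_eq_sup' hs f
  refine ⟨i, hi, h.trans ?_⟩
  simp_rw [← smul_eq_mul, ← centerMass_eq_of_sum_1 s f hw₁, ← hmax]
  exact centerMass_le_sup hw₀ (hw₁ ▸ one_pos)

lemma card_sub_sum_div_le_card_filter {ι : Type*} (s : Finset ι) {r : ι → ℝ}
    (hr : ∀ i ∈ s, 0 ≤ r i) {t : ℝ} (ht : 0 < t) :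
    (#s : ℝ) - (∑ i ∈ s, r i) / t ≤ #{i ∈ s | r i ≤ t} := by
  have hbad : #{i ∈ s | ¬r i ≤ t} * t ≤ ∑ i ∈ s, r i := by
    calc #{i ∈ s | ¬r i ≤ t} * t ≤ ∑ i ∈ s with ¬r i ≤ t, r i := by
          rw [← nsmul_eq_mul]
          exact card_nsmul_le_sum _ _ _ fun i hi => (not_le.1 (mem_filter.1 hi).2).le
      _ ≤ ∑ i ∈ s, r i :=
          sum_le_sum_of_subset_of_nonneg (filter_subset _ _) fun i hi _ => hr i hi
  have hcard : (#s : ℝ) = #{i ∈ s | r i ≤ t} + #{i ∈ s | ¬r i ≤ t} := by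
    exact_mod_cast (card_filter_add_card_filter_not (s := s) fun i => r i ≤ t).symm
  have := (le_div_iff₀ ht).2 hbad
  linarith

lemma norm_extend_zero_le {ι κ : Type*} [Fintype ι] [Fintype κ] (f : ι → κ) (y : ι → ℝ) :
    ‖Function.extend f y 0‖ ≤ ‖y‖ := by
  classical
  refine (pi_norm_le_iff_of_nonneg (norm_nonneg y)).2 fun j => ?_
  by_cases h : ∃ i, f i = j
  · rw [Function.extend_def, dif_pos h]
    exact norm_le_pi_norm y _
  · rw [Function.extend_apply' _ _ _ h, Pi.zero_apply, norm_zero]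
    exact norm_nonneg y

namespace ellInf

lemma apply_eq_sum_smul {m : ℕ} {M : Type*} [NormedAddCommGroup M] [NormedSpace ℝ M]
    (L : ellInf m →L[ℝ] M) (x : ellInf m) : L x = ∑ j, x j • L (PiLp.single ⊤ j 1) := by
  conv_lhs => rw [← (PiLp.basisFun ⊤ ℝ (Fin m)).sum_repr x]
  simp [map_sum, map_smul]

lemma sum_abs_apply_single_le_opNorm {m : ℕ} (φ : ellInf m →L[ℝ] ℝ) :
    ∑ j, |φ (PiLp.single ⊤ j 1)| ≤ ‖φ‖ := by
  set z : ellInf m := WithLp.toLp ⊤ fun j => (SignType.sign (φ (PiLp.single ⊤ j 1)) : ℝ)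
  have hz : ‖z‖ ≤ 1 := by
    rw [PiLp.norm_toLp, pi_norm_le_iff_of_nonneg zero_le_one]
    intro j
    rcases lt_trichotomy (φ (PiLp.single ⊤ j 1)) 0 with h | h | h <;> simp [h]
  calc ∑ j, |φ (PiLp.single ⊤ j 1)| = φ z := by
        rw [apply_eq_sum_smul φ z]
        simp [z, mul_comm, self_mul_sign]
    _ ≤ ‖φ‖ * ‖z‖ := (le_abs_self _).trans (φ.le_opNorm z)
    _ ≤ ‖φ‖ := mul_le_of_le_one_right (norm_nonneg _) hz

lemma sum_abs_apply_single_le {m : ℕ} {X : Type*} [NormedAddCommGroup X] [NormedSpace ℝ X]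
    (V : ellInf m →L[ℝ] X) (g : X →L[ℝ] ℝ) :
    ∑ j, |g (V (PiLp.single ⊤ j 1))| ≤ ‖g‖ * ‖V‖ :=
  (sum_abs_apply_single_le_opNorm (g.comp V)).trans (g.opNorm_comp_le V)

noncomputable def extendByZero {k m : ℕ} (ι : Fin k → Fin m) : ellInf k →L[ℝ] ellInf m :=
  LinearMap.mkContinuous
    ((WithLp.linearEquiv ⊤ ℝ (Fin m → ℝ)).symm.toLinearMap ∘ₗ
      Function.ExtendByZero.linearMap ℝ ι ∘ₗ (WithLp.linearEquiv ⊤ ℝ (Fin k → ℝ)).toLinearMap)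
    1 fun y => by
      change ‖WithLp.toLp ⊤ (Function.extend ι (WithLp.ofLp y) 0)‖ ≤ 1 * ‖y‖
      rw [PiLp.norm_toLp, ← PiLp.norm_ofLp y, one_mul]
      exact norm_extend_zero_le ι (WithLp.ofLp y)

lemma norm_extendByZero_le {k m : ℕ} (ι : Fin k → Fin m) : ‖extendByZero ι‖ ≤ 1 :=
  LinearMap.mkContinuous_norm_le _ zero_le_one _

lemma extendByZero_single {k m : ℕ} {ι : Fin k → Fin m} (hι : Function.Injective ι)
    (l : Fin k) : extendByZero ι (PiLp.single ⊤ l 1) = PiLp.single ⊤ (ι l) 1 := by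
  ext j
  change Function.extend ι (Pi.single l 1 : Fin k → ℝ) 0 j = (Pi.single (ι l) 1 : Fin m → ℝ) j
  by_cases h : ∃ l', ι l' = j
  · obtain ⟨l', rfl⟩ := h
    simp [hι.extend_apply, Pi.single_apply, hι.eq_iff]
  · rw [Function.extend_apply' _ _ _ h, Pi.zero_apply, Pi.single_eq_of_ne]
    exact fun hj => h ⟨l, hj.symm⟩

noncomputable def ofFunctionals {X : Type*} [NormedAddCommGroup X] [NormedSpace ℝ X] {k : ℕ}
    (g : Fin k → X →L[ℝ] ℝ) : X →L[ℝ] ellInf k :=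
  (PiLp.continuousLinearEquiv ⊤ ℝ fun _ : Fin k => ℝ).symm.toContinuousLinearMap.comp
    (ContinuousLinearMap.pi g)

@[simp]
lemma ofFunctionals_apply {X : Type*} [NormedAddCommGroup X] [NormedSpace ℝ X] {k : ℕ}
    (g : Fin k → X →L[ℝ] ℝ) (x : X) (l : Fin k) : ofFunctionals g x l = g l x := rfl

lemma norm_ofFunctionals_le {X : Type*} [NormedAddCommGroup X] [NormedSpace ℝ X] {k : ℕ}
    {g : Fin k → X →L[ℝ] ℝ} (hg : ∀ l, ‖g l‖ ≤ 1) : ‖ofFunctionals g‖ ≤ 1 := by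
  refine ContinuousLinearMap.opNorm_le_bound _ zero_le_one fun x => ?_
  rw [← PiLp.norm_ofLp, one_mul, pi_norm_le_iff_of_nonneg (norm_nonneg x)]
  exact fun l => (g l).le_of_opNorm_le (hg l) x |>.trans_eq (one_mul _)

end ellInf

section RandomSubset

variable {α : Type*} [Fintype α]

/-- The probability of `σ` for the random subset of `α` that contains each point independently
with probability `p`. -/
def bernoulliSubsetWeight (p : ℝ) (σ : Finset α) : ℝ :=
  p ^ #σ * (1 - p) ^ (Fintype.card α - #σ)

lemma bernoulliSubsetWeight_nonneg {p : ℝ} (hp₀ : 0 ≤ p) (hp₁ : p ≤ 1) (σ : Finset α) :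
    0 ≤ bernoulliSubsetWeight p σ := by
  unfold bernoulliSubsetWeight
  have : 0 ≤ 1 - p := sub_nonneg.2 hp₁
  positivity

variable [DecidableEq α]

lemma sum_bernoulliSubsetWeight_ite_subset (p : ℝ) (τ : Finset α) :
    ∑ σ, (if τ ⊆ σ then bernoulliSubsetWeight p σ else 0) = p ^ #τ := by
  have hfilter : ({σ | τ ⊆ σ} : Finset (Finset α)) = Icc τ univ := by
    ext σ; simp [subset_univ]
  rw [← sum_filter, hfilter, Icc_eq_image_powerset (subset_univ τ), sum_image]
  · have hw (x : Finset α) (hx : x ∈ (univ \ τ).powerset) : bernoulliSubsetWeight p (τ ∪ x) =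
        p ^ #τ * (p ^ #x * (1 - p) ^ (#(univ \ τ) - #x)) := by
      have hdisj : Disjoint τ x := disjoint_of_subset_right (mem_powerset.1 hx) disjoint_sdiff
      rw [bernoulliSubsetWeight, card_union_of_disjoint hdisj, card_univ_sdiff, pow_add,
        mul_assoc]
      congr 3
      omega
    rw [sum_congr rfl hw, ← mul_sum, sum_pow_mul_eq_add_pow, add_sub_cancel, one_pow, mul_one]
  · intro x hx y hy hxy
    have hdisj {z : Finset α} (hz : z ∈ ((univ \ τ).powerset : Set (Finset α))) :
        Disjoint τ z :=
      disjoint_of_subset_right (mem_powerset.1 hz) disjoint_sdiff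
    rw [← union_sdiff_cancel_left (hdisj hx), ← union_sdiff_cancel_left (hdisj hy)]
    exact congrArg (· \ τ) hxy

lemma sum_bernoulliSubsetWeight (p : ℝ) : ∑ σ : Finset α, bernoulliSubsetWeight p σ = 1 := by
  simpa using sum_bernoulliSubsetWeight_ite_subset (α := α) p ∅

lemma sum_bernoulliSubsetWeight_mul_card (p : ℝ) :
    ∑ σ : Finset α, bernoulliSubsetWeight p σ * #σ = p * Fintype.card α := by
  have h (σ : Finset α) : bernoulliSubsetWeight p σ * #σ =
      ∑ i, if {i} ⊆ σ then bernoulliSubsetWeight p σ else 0 := by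
    simp [singleton_subset_iff, mul_comm]
  simp_rw [h]
  rw [sum_comm]
  simp only [sum_bernoulliSubsetWeight_ite_subset, card_singleton, pow_one, sum_const, card_univ,
    nsmul_eq_mul]
  ring

lemma sum_bernoulliSubsetWeight_mul_sum_erase (p : ℝ) (b : α → α → ℝ) :
    ∑ σ : Finset α, bernoulliSubsetWeight p σ * ∑ i ∈ σ, ∑ j ∈ σ.erase i, b i j =
      p ^ 2 * ∑ i, ∑ j ∈ univ.erase i, b i j := by
  have h (σ : Finset α) : bernoulliSubsetWeight p σ * ∑ i ∈ σ, ∑ j ∈ σ.erase i, b i j =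
      ∑ i, ∑ j ∈ univ.erase i,
        (if {i, j} ⊆ σ then bernoulliSubsetWeight p σ else 0) * b i j := by
    simp only [ite_mul, zero_mul, insert_subset_iff, singleton_subset_iff]
    rw [mul_sum, ← Fintype.sum_extend_by_zero]
    refine sum_congr rfl fun i _ => ?_
    by_cases hi : i ∈ σ
    · simp only [hi, true_and, if_true]
      rw [sum_ite_mem, erase_inter, univ_inter, mul_sum]
    · simp only [hi, false_and, if_false, sum_const_zero]
  simp_rw [h]
  rw [sum_comm, mul_sum]
  refine sum_congr rfl fun i _ => ?_
  rw [sum_comm, mul_sum]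
  refine sum_congr rfl fun j hj => ?_
  rw [← sum_mul, sum_bernoulliSubsetWeight_ite_subset, card_pair (ne_of_mem_erase hj).symm]

lemma exists_large_subset_sum_erase_le_s2 {δ : ℝ} (hδ₀ : 0 < δ) (hδ₄ : δ ≤ 4) {b : α → α → ℝ}
    (hb : ∀ i j, 0 ≤ b i j) (hrow : ∀ i, ∑ j ∈ univ.erase i, b i j ≤ 1) :
    ∃ σ : Finset α, δ * Fintype.card α / 8 ≤ #σ ∧
      ∀ i ∈ σ, ∑ j ∈ σ.erase i, b i j ≤ δ / 2 := by
  have hexp : δ * Fintype.card α / 8 ≤ ∑ σ : Finset α, bernoulliSubsetWeight (δ / 4) σ *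
      (#σ - (∑ i ∈ σ, ∑ j ∈ σ.erase i, b i j) / (δ / 2)) := by
    simp only [mul_sub, sum_sub_distrib, mul_div_assoc', ← sum_div,
      sum_bernoulliSubsetWeight_mul_card, sum_bernoulliSubsetWeight_mul_sum_erase]
    have hS : ∑ i, ∑ j ∈ univ.erase i, b i j ≤ Fintype.card α := by
      simpa using sum_le_sum fun i (_ : i ∈ univ) => hrow i
    have hpen : ((δ / 4) ^ 2 * ∑ i, ∑ j ∈ univ.erase i, b i j) / (δ / 2) =
        δ / 8 * ∑ i, ∑ j ∈ univ.erase i, b i j := by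
      field_simp
      ring
    rw [hpen]
    linarith [mul_le_mul_of_nonneg_left hS hδ₀.le]
  obtain ⟨σ, -, hσ⟩ := exists_le_of_le_sum_mul
    (fun σ _ => bernoulliSubsetWeight_nonneg (by positivity) (by linarith) σ)
    (sum_bernoulliSubsetWeight _) hexp
  refine ⟨{i ∈ σ | ∑ j ∈ σ.erase i, b i j ≤ δ / 2}, ?_, fun i hi => ?_⟩
  · exact hσ.trans (card_sub_sum_div_le_card_filter σ
      (fun i _ => sum_nonneg fun j _ => hb i j) (by positivity))
  · exact (sum_le_sum_of_subset_of_nonneg (erase_subset_erase _ (filter_subset _ _))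
      fun j _ _ => hb i j).trans (mem_filter.1 hi).2

end RandomSubset

lemma gammaFac_id_le_of_diag_dominant {X : Type*} [NormedAddCommGroup X] [NormedSpace ℝ X]
    {m : ℕ} (V : ellInf m →L[ℝ] X) {f : Fin m → X →L[ℝ] ℝ} (hf : ∀ i, ‖f i‖ ≤ 1) {δ : ℝ}
    (hδ : 0 < δ) (σ : Finset (Fin m)) (hdiag : ∀ i ∈ σ, δ ≤ f i (V (PiLp.single ⊤ i 1)))
    (hrow : ∀ i ∈ σ, ∑ j ∈ σ.erase i, |f i (V (PiLp.single ⊤ j 1))| ≤ δ / 2) :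
    gammaFac V (ContinuousLinearMap.id ℝ (ellInf #σ)) ≤ ENNReal.ofReal (2 * δ⁻¹) := by
  set ι := σ.orderEmbOfFin rfl
  set J := ellInf.extendByZero ι
  set u := ellInf.ofFunctionals fun l => f (ι l)
  set a : Matrix (Fin #σ) (Fin #σ) ℝ := fun l l' => f (ι l) (V (PiLp.single ⊤ (ι l') 1))
  have hmulVec (y : ellInf #σ) : u (V (J y)) = WithLp.toLp ⊤ (a.mulVec (WithLp.ofLp y)) := by
    ext l
    rw [ellInf.ofFunctionals_apply,
      show f (ι l) (V (J y)) = ((f (ι l)).comp (V.comp J)) y from rfl, ellInf.apply_eq_sum_smul]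
    simp [J, ellInf.extendByZero_single ι.injective, Matrix.mulVec, dotProduct, a, mul_comm]
  have hdominant (l : Fin #σ) : δ / 2 + ∑ l' ∈ univ.erase l, |a l l'| ≤ |a l l| := by
    have hmem : ι l ∈ σ := orderEmbOfFin_mem σ rfl l
    have hsum : ∑ l' ∈ univ.erase l, |a l l'| =
        ∑ j ∈ σ.erase (ι l), |f (ι l) (V (PiLp.single ⊤ j 1))| := by
      have := sum_map (univ.erase l) ι.toEmbedding fun j => |f (ι l) (V (PiLp.single ⊤ j 1))|
      rw [map_erase, map_orderEmbOfFin_univ] at this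
      exact this.symm
    rw [hsum, abs_of_nonneg (hδ.le.trans (hdiag _ hmem))]
    linarith [hrow _ hmem, hdiag _ hmem]
  have hbelow (y : ellInf #σ) : δ / 2 * ‖y‖ ≤ ‖u (V (J y))‖ := by
    rw [hmulVec, PiLp.norm_toLp, PiLp.norm_toLp]
    exact mul_norm_le_norm_mulVec_of_diag_dominant a hdominant _
  have hJu : ‖J‖ * ‖u‖ ≤ 1 := mul_le_one₀ (ellInf.norm_extendByZero_le ι) (norm_nonneg _)
    (ellInf.norm_ofFunctionals_le fun l => hf _)
  calc gammaFac V (ContinuousLinearMap.id ℝ (ellInf #σ))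
      ≤ ENNReal.ofReal (‖J‖ * ‖u‖ / (δ / 2)) :=
        gammaFac_id_le_of_le_norm V J u (by positivity) hbelow
    _ ≤ ENNReal.ofReal (2 * δ⁻¹) := by
        refine ENNReal.ofReal_le_ofReal ?_
        rw [div_div_eq_mul_div, mul_comm 2 δ⁻¹, ← div_eq_inv_mul]
        gcongr
        linarith

theorem statement2_general
    {X : Type*} [NormedAddCommGroup X] [NormedSpace ℝ X]
    (m : ℕ) (V : ellInf m →L[ℝ] X) (δ : ℝ) (hδ : 0 < δ)
    (hV : ‖V‖ = 1)
    (he : ∀ i : Fin m, ‖V ((WithLp.equiv ⊤ (Fin m → ℝ)).symm (Pi.single i 1))‖ ≥ δ) :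
    ∃ k : ℕ, (k : ℝ) ≥ (1 / 8) * δ * m ∧
      gammaFac V (ContinuousLinearMap.id ℝ (ellInf k)) ≤ ENNReal.ofReal (2 * δ⁻¹) := by
  simp only [WithLp.equiv_symm_apply, PiLp.toLp_single, ge_iff_le] at he
  choose f hf_norm hf_apply using fun i =>
    exists_dual_vector ℝ (V (PiLp.single ⊤ i 1)) (hδ.trans_le (he i)).ne'
  have hdiag (i : Fin m) : δ ≤ f i (V (PiLp.single ⊤ i 1)) := by simpa [hf_apply] using he i
  have hrow (i : Fin m) : δ + ∑ j ∈ univ.erase i, |f i (V (PiLp.single ⊤ j 1))| ≤ 1 := by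
    have := ellInf.sum_abs_apply_single_le V (f i)
    rw [hf_norm, hV, one_mul, ← add_sum_erase _ _ (mem_univ i)] at this
    linarith [le_abs_self (f i (V (PiLp.single ⊤ i 1))), hdiag i]
  obtain ⟨σ, hσ_card, hσ_row⟩ : ∃ σ : Finset (Fin m), δ * m / 8 ≤ #σ ∧
      ∀ i ∈ σ, ∑ j ∈ σ.erase i, |f i (V (PiLp.single ⊤ j 1))| ≤ δ / 2 := by
    rcases Nat.eq_zero_or_pos m with rfl | hm
    · exact ⟨∅, by simp, by simp⟩
    have hδ₁ : δ ≤ 1 :=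
      (le_add_of_nonneg_right (sum_nonneg fun _ _ => abs_nonneg _)).trans (hrow ⟨0, hm⟩)
    simpa using exists_large_subset_sum_erase_le_s2 hδ (by linarith)
      (b := fun i j => |f i (V (PiLp.single ⊤ j 1))|) (fun _ _ => abs_nonneg _)
      fun i => by linarith [hrow i]
  exact ⟨#σ, by linarith,
    gammaFac_id_le_of_diag_dominant V (fun i => (hf_norm i).le) hδ σ (fun i _ => hdiag i) hσ_row⟩

theorem statement2
    {X : Type*} [NormedAddCommGroup X] [NormedSpace ℝ X] [CompleteSpace X]
    (m : ℕ) (V : ellInf m →L[ℝ] X) (δ : ℝ) (hδ : 0 < δ)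
    (hV : ‖V‖ = 1)
    (he : ∀ i : Fin m, ‖V ((WithLp.equiv ⊤ (Fin m → ℝ)).symm (Pi.single i 1))‖ ≥ δ) :
    ∃ k : ℕ, (k : ℝ) ≥ (1 / 8) * δ * m ∧
      gammaFac V (ContinuousLinearMap.id ℝ (ellInf k)) ≤ ENNReal.ofReal (2 * δ⁻¹) :=
  statement2_general m V δ hδ hV he
end

section
/- Let Z and W be Banach spaces, let T : Z → W be a bounded linear operator, let Z_0 be a subspace of Z with dim T(Z_0) = n < ∞, and let α be a norm on the space F(Z,W) of finite rank bounded operators from Z to W such that α(u) ≤ ‖u‖ whenever rank u = 1. If 1 ≤ β < ∞ and q_W(n,β) < ∞, then there exists a finite rank operator P : W → W with ‖P‖ ≤ β, rank P ≤ q_W(n,β), and α(P∘T) ≥ inf{ α(u) : u ∈ F(Z,W), u|_{Z_0} = T|_{Z_0} }. -/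
open MeasureTheory ENNReal

/-!
Let `u₀ = ∑ gᵢ ⊗ yᵢ` be a finite rank operator agreeing with `T` on `Z₀`, with `n` terms, and
`d` the infimum. Hahn–Banach gives a functional `φ` on finite rank operators with `|φ| ≤ α`,
killing the operators that vanish on `Z₀`, and with `φ u₀ = d`. Since `α ≤ ‖·‖` on rank one
operators, `v w = (φ (gᵢ ⊗ w))ᵢ` is a bounded operator into `ℝⁿ`, so `q_W(n, β)` provides `P`
with `v ∘ P = v`. Then `d = φ u₀ = ∑ v (yᵢ) i = ∑ v (P yᵢ) i = φ (P ∘ u₀) = φ (P ∘ T) ≤ α (P ∘ T)`.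
-/

theorem Seminorm.exists_linearMap_abs_le_of_le_add {X : Type*} [AddCommGroup X] [Module ℝ X]
    (p : Seminorm ℝ X) (A : Submodule ℝ X) {x₀ : X} {d : ℝ} (hd : 0 ≤ d)
    (h : ∀ a ∈ A, d ≤ p (x₀ + a)) :
    ∃ φ : X →ₗ[ℝ] ℝ, (∀ x, |φ x| ≤ p x) ∧ (∀ a ∈ A, φ a = 0) ∧ φ x₀ = d := by
  by_cases hx₀ : x₀ ∈ A
  · have hd0 : d = 0 := le_antisymm (by simpa using h (-x₀) (neg_mem hx₀)) hd
    exact ⟨0, fun x => by simp, fun _ _ => rfl, by simp [hd0]⟩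
  let f₀ : X →ₗ.[ℝ] ℝ := ⟨A, 0⟩
  have hf_apply (a : X) (ha : a ∈ A) (c : ℝ) (hx) :
      f₀.supSpanSingleton x₀ d hx₀ ⟨a + c • x₀, hx⟩ = c * d := by
    simpa [f₀] using f₀.supSpanSingleton_apply_mk x₀ d hx₀ a ha c
  have hf : ∀ x, f₀.supSpanSingleton x₀ d hx₀ x ≤ p x := by
    rintro ⟨x, hx⟩
    obtain ⟨a, ha, _, hc, rfl⟩ := Submodule.mem_sup.1 hx
    obtain ⟨c, rfl⟩ := Submodule.mem_span_singleton.1 hc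
    rw [hf_apply a ha c hx]
    rcases le_or_gt c 0 with hc | hc
    · exact (mul_nonpos_of_nonpos_of_nonneg hc hd).trans (apply_nonneg p _)
    · calc c * d ≤ c * p (x₀ + c⁻¹ • a) := by gcongr; exact h _ (A.smul_mem c⁻¹ ha)
        _ = p (a + c • x₀) := by
          rw [← Real.norm_of_nonneg hc.le, ← map_smul_eq_mul, smul_add, smul_smul,
            Real.norm_of_nonneg hc.le, mul_inv_cancel₀ hc.ne', one_smul, add_comm]
  obtain ⟨φ, hφf, hφp⟩ := exists_extension_of_le_sublinear _ p
    (fun c hc x => by rw [map_smul_eq_mul, Real.norm_of_nonneg hc.le]) (map_add_le_add p) hf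
  refine ⟨φ, fun x => abs_le.2 ⟨?_, hφp x⟩, fun a ha => ?_, ?_⟩
  · simpa [neg_le] using hφp (-x)
  · exact (hφf ⟨a, Submodule.mem_sup_left ha⟩).trans
      (f₀.supSpanSingleton_apply_mk_of_mem d hx₀ (x' := a) ha)
  · exact (hφf ⟨x₀, _⟩).trans (f₀.supSpanSingleton_apply_self d hx₀)

theorem Submodule.exists_sum_smul_eq_of_finrank_eq {𝕜 W : Type*} [RCLike 𝕜]
    [NormedAddCommGroup W] [NormedSpace 𝕜 W] (F : Submodule 𝕜 W) [FiniteDimensional 𝕜 F]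
    {n : ℕ} (hn : Module.finrank 𝕜 F = n) :
    ∃ (f : Fin n → StrongDual 𝕜 W) (y : Fin n → W), ∀ w ∈ F, ∑ i, f i w • y i = w := by
  obtain ⟨Q, hQ⟩ := Submodule.ClosedComplemented.of_finiteDimensional F
  let b := Module.finBasisOfFinrankEq 𝕜 F hn
  refine ⟨fun i => (LinearMap.toContinuousLinearMap (b.coord i)).comp Q, fun i => b i,
    fun w hw => ?_⟩
  have := congrArg Subtype.val (b.sum_repr ⟨w, hw⟩)
  simp only [Submodule.coe_sum, Submodule.coe_smul] at this
  simpa [hQ ⟨w, hw⟩] using this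

section FiniteRank

variable {𝕜 Z W : Type*} [NontriviallyNormedField 𝕜] [NormedAddCommGroup Z] [NormedSpace 𝕜 Z]
  [NormedAddCommGroup W] [NormedSpace 𝕜 W]

variable (𝕜 Z W) in
def finiteRankOps : Submodule 𝕜 (Z →L[𝕜] W) where
  carrier := {u | FiniteDimensional 𝕜 (LinearMap.range (u : Z →ₗ[𝕜] W))}
  add_mem' {u v} (hu : FiniteDimensional 𝕜 _) (hv : FiniteDimensional 𝕜 _) :=
    Submodule.finiteDimensional_of_le (LinearMap.range_add_le (u : Z →ₗ[𝕜] W) v)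
  zero_mem' := by
    show FiniteDimensional 𝕜 (LinearMap.range (0 : Z →ₗ[𝕜] W))
    rw [LinearMap.range_zero]
    infer_instance
  smul_mem' c u (hu : FiniteDimensional 𝕜 _) :=
    Submodule.finiteDimensional_of_le (LinearMap.range_smul_le_range (u : Z →ₗ[𝕜] W) c)

theorem smulRight_mem_finiteRankOps (g : StrongDual 𝕜 Z) (w : W) :
    g.smulRight w ∈ finiteRankOps 𝕜 Z W := by
  refine Submodule.finiteDimensional_of_le (S₂ := 𝕜 ∙ w) ?_
  rintro _ ⟨z, rfl⟩
  exact Submodule.smul_mem _ _ (Submodule.mem_span_singleton_self w)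

theorem comp_mem_finiteRankOps {V : Type*} [NormedAddCommGroup V] [NormedSpace 𝕜 V]
    {P : W →L[𝕜] V} (hP : P ∈ finiteRankOps 𝕜 W V) (u : Z →L[𝕜] W) :
    P ∘L u ∈ finiteRankOps 𝕜 Z V :=
  have : FiniteDimensional 𝕜 _ := hP
  Submodule.finiteDimensional_of_le (LinearMap.range_comp_le_range _ _)

theorem rank_range_smulRight {g : StrongDual 𝕜 Z} (hg : g ≠ 0) {w : W} (hw : w ≠ 0) :
    Module.rank 𝕜 (LinearMap.range (g.smulRight w : Z →ₗ[𝕜] W)) = 1 := by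
  rw [ContinuousLinearMap.range_smulRight_apply hg, ← Module.finrank_eq_rank,
    finrank_span_singleton hw, Nat.cast_one]

end FiniteRank

section RealOperators

variable {Z W : Type*} [NormedAddCommGroup Z] [NormedSpace ℝ Z]
  [NormedAddCommGroup W] [NormedSpace ℝ W]

noncomputable def finiteRankSeminorm (α : (Z →L[ℝ] W) → ℝ)
    (hα_add : ∀ u v : Z →L[ℝ] W, FiniteDimensional ℝ (LinearMap.range u.toLinearMap) →
      FiniteDimensional ℝ (LinearMap.range v.toLinearMap) → α (u + v) ≤ α u + α v)
    (hα_smul : ∀ (c : ℝ) (u : Z →L[ℝ] W), FiniteDimensional ℝ (LinearMap.range u.toLinearMap) →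
      α (c • u) = |c| * α u) :
    Seminorm ℝ (finiteRankOps ℝ Z W) :=
  Seminorm.of (fun u => α u) (fun u v => hα_add u v u.2 v.2) (fun c u => hα_smul c u u.2)

theorem exists_linearMap_abs_le_of_le_of_eqOn (Z₀ : Submodule ℝ Z) (α : (Z →L[ℝ] W) → ℝ)
    (hα_add : ∀ u v : Z →L[ℝ] W, FiniteDimensional ℝ (LinearMap.range u.toLinearMap) →
      FiniteDimensional ℝ (LinearMap.range v.toLinearMap) → α (u + v) ≤ α u + α v)
    (hα_smul : ∀ (c : ℝ) (u : Z →L[ℝ] W), FiniteDimensional ℝ (LinearMap.range u.toLinearMap) →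
      α (c • u) = |c| * α u)
    {u₀ : Z →L[ℝ] W} (hu₀ : u₀ ∈ finiteRankOps ℝ Z W) {d : ℝ} (hd : 0 ≤ d)
    (hle : ∀ u ∈ finiteRankOps ℝ Z W, (∀ z ∈ Z₀, u z = u₀ z) → d ≤ α u) :
    ∃ φ : (Z →L[ℝ] W) →ₗ[ℝ] ℝ, (∀ u ∈ finiteRankOps ℝ Z W, |φ u| ≤ α u) ∧
      (∀ u ∈ finiteRankOps ℝ Z W, (∀ z ∈ Z₀, u z = 0) → φ u = 0) ∧ φ u₀ = d := by
  let A : Submodule ℝ (finiteRankOps ℝ Z W) :=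
    { carrier := {u | ∀ z ∈ Z₀, (u : Z →L[ℝ] W) z = 0}
      add_mem' := fun hu hv z hz => by simp [hu z hz, hv z hz]
      zero_mem' := fun z _ => rfl
      smul_mem' := fun c u hu z hz => by simp [hu z hz] }
  obtain ⟨φ₀, hφ₀α, hφ₀A, hφ₀u₀⟩ :=
    (finiteRankSeminorm α hα_add hα_smul).exists_linearMap_abs_le_of_le_add A
      (x₀ := ⟨u₀, hu₀⟩) hd fun a ha => hle _ (⟨u₀, hu₀⟩ + a).2 fun z hz => by simp [ha z hz]
  obtain ⟨φ, hφ⟩ := LinearMap.exists_extend φ₀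
  have hφφ₀ (u : Z →L[ℝ] W) (hu : u ∈ finiteRankOps ℝ Z W) : φ u = φ₀ ⟨u, hu⟩ :=
    LinearMap.congr_fun hφ ⟨u, hu⟩
  exact ⟨φ, fun u hu => (hφφ₀ u hu ▸ hφ₀α _),
    fun u hu hu0 => (hφφ₀ u hu).trans (hφ₀A _ hu0), (hφφ₀ u₀ hu₀).trans hφ₀u₀⟩

theorem apply_smulRight_le_norm_mul_norm (α : (Z →L[ℝ] W) → ℝ) (hα₀ : α 0 = 0)
    (hα_rank1 : ∀ u : Z →L[ℝ] W,
      Module.rank ℝ (LinearMap.range u.toLinearMap) = 1 → α u ≤ ‖u‖)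
    (g : StrongDual ℝ Z) (w : W) : α (g.smulRight w) ≤ ‖g‖ * ‖w‖ := by
  rcases eq_or_ne g 0 with rfl | hg
  · simp [hα₀]
  rcases eq_or_ne w 0 with rfl | hw
  · simp [hα₀]
  rw [← ContinuousLinearMap.norm_smulRight_apply]
  exact hα_rank1 _ (rank_range_smulRight hg hw)

theorem exists_apply_eq_map_smulRight {ι : Type*} [Fintype ι]
    (φ : (Z →L[ℝ] W) →ₗ[ℝ] ℝ) (g : ι → StrongDual ℝ Z) (C : ι → ℝ)
    (hφ : ∀ i w, |φ ((g i).smulRight w)| ≤ C i * ‖w‖) :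
    ∃ v : W →L[ℝ] (ι → ℝ), ∀ w i, v w i = φ ((g i).smulRight w) :=
  ⟨.pi fun i => (φ ∘ₗ (ContinuousLinearMap.smulRightL ℝ Z W (g i)).toLinearMap).mkContinuous
    (C i) (hφ i), fun _ _ => rfl⟩

theorem map_comp_sum_smulRight_eq {ι : Type*} [Fintype ι]
    (φ : (Z →L[ℝ] W) →ₗ[ℝ] ℝ) (g : ι → StrongDual ℝ Z) (y : ι → W)
    {v : W →L[ℝ] (ι → ℝ)} (hv : ∀ w i, v w i = φ ((g i).smulRight w))
    {P : W →L[ℝ] W} (hvP : v ∘L P = v) :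
    φ (P ∘L ∑ i, (g i).smulRight (y i)) = φ (∑ i, (g i).smulRight (y i)) := by
  have hcomp : P ∘L ∑ i, (g i).smulRight (y i) = ∑ i, (g i).smulRight (P (y i)) := by
    ext z
    simp
  rw [hcomp, map_sum, map_sum]
  refine Finset.sum_congr rfl fun i _ => ?_
  rw [← hv, ← hv, ← ContinuousLinearMap.comp_apply, hvP]

end RealOperators

theorem exists_comp_eq_of_qW_ne_top {W : Type*} [NormedAddCommGroup W] [NormedSpace ℝ W]
    {n : ℕ} {β : ℝ} (hq : qW W n β ≠ ⊤) {E : Type} [NormedAddCommGroup E] [NormedSpace ℝ E]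
    (v : W →L[ℝ] E) (hv : Module.rank ℝ (LinearMap.range v.toLinearMap) ≤ n) :
    ∃ P : W →L[ℝ] W, v ∘L P = v ∧ ‖P‖ ≤ β ∧
      FiniteDimensional ℝ (LinearMap.range P.toLinearMap) ∧
      (Module.finrank ℝ (LinearMap.range P.toLinearMap) : ℕ∞) ≤ qW W n β := by
  rw [qW] at hq ⊢
  obtain ⟨_, hmem, -⟩ := sInf_lt_iff.1 hq.lt_top
  obtain ⟨k, hk, hP⟩ := csInf_mem ⟨_, hmem⟩
  obtain ⟨P, hvP, hPβ, hPk⟩ := hP E v hv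
  refine ⟨P, hvP, hPβ, Module.rank_lt_aleph0_iff.1 (hPk.trans_lt Cardinal.natCast_lt_aleph0), ?_⟩
  rw [hk]
  exact_mod_cast Module.finrank_le_of_rank_le hPk

theorem statement9_general
    {Z W : Type*} [NormedAddCommGroup Z] [NormedSpace ℝ Z]
    [NormedAddCommGroup W] [NormedSpace ℝ W]
    (T : Z →L[ℝ] W) (Z₀ : Subspace ℝ Z) (n : ℕ)
    [FiniteDimensional ℝ (Z₀.map T.toLinearMap)]
    (hn : Module.finrank ℝ (Z₀.map T.toLinearMap) = n)
    (α : (Z →L[ℝ] W) → ℝ)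
    (hα_add : ∀ u v : Z →L[ℝ] W, FiniteDimensional ℝ (LinearMap.range u.toLinearMap) →
      FiniteDimensional ℝ (LinearMap.range v.toLinearMap) → α (u + v) ≤ α u + α v)
    (hα_smul : ∀ (c : ℝ) (u : Z →L[ℝ] W), FiniteDimensional ℝ (LinearMap.range u.toLinearMap) →
      α (c • u) = |c| * α u)
    (hα_rank1 : ∀ u : Z →L[ℝ] W,
      Module.rank ℝ (LinearMap.range u.toLinearMap) = 1 → α u ≤ ‖u‖)
    (β : ℝ) (hq : qW W n β ≠ ⊤) :
    ∃ P : W →L[ℝ] W, FiniteDimensional ℝ (LinearMap.range P.toLinearMap) ∧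
      ‖P‖ ≤ β ∧ (Module.finrank ℝ (LinearMap.range P.toLinearMap) : ℕ∞) ≤ qW W n β ∧
      sInf {a : ℝ | ∃ u : Z →L[ℝ] W, FiniteDimensional ℝ (LinearMap.range u.toLinearMap) ∧
        (∀ z ∈ Z₀, u z = T z) ∧ a = α u} ≤ α (P.comp T) := by
  obtain ⟨f, y, hfy⟩ := (Z₀.map T.toLinearMap).exists_sum_smul_eq_of_finrank_eq hn
  set g := fun i => f i ∘L T
  set u₀ := ∑ i, (g i).smulRight (y i)
  have hu₀ : ∀ z ∈ Z₀, u₀ z = T z := fun z hz => by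
    simpa [u₀, g] using hfy (T z) ⟨z, hz, rfl⟩
  have hu₀_mem : u₀ ∈ finiteRankOps ℝ Z W := sum_mem fun i _ => smulRight_mem_finiteRankOps _ _
  set S := {a : ℝ | ∃ u : Z →L[ℝ] W, FiniteDimensional ℝ (LinearMap.range u.toLinearMap) ∧
    (∀ z ∈ Z₀, u z = T z) ∧ a = α u}
  let p := finiteRankSeminorm α hα_add hα_smul
  have hS_nonneg : ∀ a ∈ S, 0 ≤ a := by
    rintro _ ⟨u, hu, -, rfl⟩
    exact apply_nonneg p ⟨u, hu⟩
  obtain ⟨φ, hφα, hφ_vanish, hφu₀⟩ := exists_linearMap_abs_le_of_le_of_eqOn Z₀ α hα_add hα_smul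
    hu₀_mem (Real.sInf_nonneg hS_nonneg) fun u hu huT =>
      csInf_le ⟨0, hS_nonneg⟩ ⟨u, hu, fun z hz => (huT z hz).trans (hu₀ z hz), rfl⟩
  obtain ⟨v, hv⟩ := exists_apply_eq_map_smulRight φ g (fun i => ‖g i‖) fun i w =>
    (hφα _ (smulRight_mem_finiteRankOps _ _)).trans
      (apply_smulRight_le_norm_mul_norm α (map_zero p) hα_rank1 _ _)
  obtain ⟨P, hvP, hPβ, hPfin, hPq⟩ := exists_comp_eq_of_qW_ne_top hq v
    ((Submodule.rank_le _).trans (rank_fin_fun n).le)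
  have hPT : P ∘L T ∈ finiteRankOps ℝ Z W := comp_mem_finiteRankOps hPfin T
  refine ⟨P, hPfin, hPβ, hPq, ?_⟩
  calc _ = φ u₀ := hφu₀.symm
    _ = φ (P ∘L u₀) := (map_comp_sum_smulRight_eq φ g y hv hvP).symm
    _ = φ (P ∘L T) := by
      rw [← sub_eq_zero, ← map_sub]
      exact hφ_vanish _ (sub_mem (comp_mem_finiteRankOps hPfin _) hPT) fun z hz => by
        simp [hu₀ z hz]
    _ ≤ α (P ∘L T) := (le_abs_self _).trans (hφα _ hPT)

theorem statement9
    {Z W : Type*} [NormedAddCommGroup Z] [NormedSpace ℝ Z] [CompleteSpace Z]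
    [NormedAddCommGroup W] [NormedSpace ℝ W] [CompleteSpace W]
    (T : Z →L[ℝ] W) (Z₀ : Subspace ℝ Z) (n : ℕ)
    [FiniteDimensional ℝ (Z₀.map T.toLinearMap)]
    (hn : Module.finrank ℝ (Z₀.map T.toLinearMap) = n)
    (α : (Z →L[ℝ] W) → ℝ)
    (hα_add : ∀ u v : Z →L[ℝ] W, FiniteDimensional ℝ (LinearMap.range u.toLinearMap) →
      FiniteDimensional ℝ (LinearMap.range v.toLinearMap) → α (u + v) ≤ α u + α v)
    (hα_smul : ∀ (c : ℝ) (u : Z →L[ℝ] W), FiniteDimensional ℝ (LinearMap.range u.toLinearMap) →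
      α (c • u) = |c| * α u)
    (hα_pos : ∀ u : Z →L[ℝ] W, FiniteDimensional ℝ (LinearMap.range u.toLinearMap) →
      u ≠ 0 → 0 < α u)
    (hα_rank1 : ∀ u : Z →L[ℝ] W,
      Module.rank ℝ (LinearMap.range u.toLinearMap) = 1 → α u ≤ ‖u‖)
    (β : ℝ) (hβ : 1 ≤ β) (hq : qW W n β ≠ ⊤) :
    ∃ P : W →L[ℝ] W, FiniteDimensional ℝ (LinearMap.range P.toLinearMap) ∧
      ‖P‖ ≤ β ∧ (Module.finrank ℝ (LinearMap.range P.toLinearMap) : ℕ∞) ≤ qW W n β ∧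
      sInf {a : ℝ | ∃ u : Z →L[ℝ] W, FiniteDimensional ℝ (LinearMap.range u.toLinearMap) ∧
        (∀ z ∈ Z₀, u z = T z) ∧ a = α u} ≤ α (P.comp T) :=
  statement9_general T Z₀ n hn α hα_add hα_smul hα_rank1 β hq
end
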